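/- Let f = Σ_{r=0}^n x_r^{d_1} g_r be a CW-Nagata polynomial of bidegree (d_1,d_2). For indices r ≠ s in {0,…,n} and multi-indices ρ = (ρ_1,…,ρ_m), σ = (σ_1,…,σ_m) with ρ_1+⋯+ρ_m = σ_1+⋯+σ_m = j, 1 ≤ j ≤ d_2, the binomial X_r^{d_1}U_1^{ρ_1}⋯U_m^{ρ_m} − X_s^{d_1}U_1^{σ_1}⋯U_m^{σ_m} lies in Ann(f) if and only if (U_1^{ρ_1}⋯U_m^{ρ_m})∘g_r = (U_1^{σ_1}⋯U_m^{σ_m})∘g_s; equivalently, either both contractions are zero, or u_1^{ρ_1}⋯u_m^{ρ_m} divides g_r, u_1^{σ_1}⋯u_m^{σ_m} divides g_s, and g_r/(u_1^{ρ_1}⋯u_m^{ρ_m}) = g_s/(u_1^{σ_1}⋯u_m^{σ_m}). -/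

import Mathlib

open MvPolynomial

namespace CW

variable {σ K : Type*} [CommSemiring K]

/-- A generic "monomial contraction-type" action of the polynomial ring on itself,
determined by a structure coefficient `ν c a` (the coefficient produced when the
operator monomial with exponent `a` acts on the monomial with exponent `c`). -/
noncomputable def genAct (ν : (σ →₀ ℕ) → (σ →₀ ℕ) → K) (α f : MvPolynomial σ K) :
    MvPolynomial σ K :=
  Finsupp.sum (AddMonoidAlgebra.coeff α) fun a ca =>
    Finsupp.sum (AddMonoidAlgebra.coeff f) fun c cf => monomial (c - a) (ν c a * (ca * cf))

theorem genAct_zero_left (ν : (σ →₀ ℕ) → (σ →₀ ℕ) → K) (f : MvPolynomial σ K) :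
    genAct ν 0 f = 0 := by
  unfold genAct
  rw [AddMonoidAlgebra.coeff_zero]
  exact Finsupp.sum_zero_index

theorem genAct_zero_right (ν : (σ →₀ ℕ) → (σ →₀ ℕ) → K) (α : MvPolynomial σ K) :
    genAct ν α 0 = 0 := by
  unfold genAct
  simp only [AddMonoidAlgebra.coeff_zero, Finsupp.sum_zero_index, Finsupp.sum, Finset.sum_const_zero,
    Finsupp.support_zero, Finset.sum_empty]

theorem genAct_add_left (ν : (σ →₀ ℕ) → (σ →₀ ℕ) → K) (α β f : MvPolynomial σ K) :
    genAct ν (α + β) f = genAct ν α f + genAct ν β f := by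
  unfold genAct
  rw [AddMonoidAlgebra.coeff_add]
  apply Finsupp.sum_add_index'
  · intro a
    simp only [mul_zero, zero_mul, map_zero, Finsupp.sum, Finset.sum_const_zero]
  · intro a b₁ b₂
    rw [← Finsupp.sum_add]
    apply Finsupp.sum_congr
    intro c _
    rw [add_mul, mul_add, map_add]

theorem genAct_add_right (ν : (σ →₀ ℕ) → (σ →₀ ℕ) → K) (α f g : MvPolynomial σ K) :
    genAct ν α (f + g) = genAct ν α f + genAct ν α g := by
  unfold genAct
  rw [← Finsupp.sum_add]
  apply Finsupp.sum_congr
  intro a _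
  rw [AddMonoidAlgebra.coeff_add]
  apply Finsupp.sum_add_index'
  · intro c
    simp only [mul_zero, map_zero]
  · intro c c₁ c₂
    rw [mul_add, mul_add, map_add]

theorem genAct_monomial (ν : (σ →₀ ℕ) → (σ →₀ ℕ) → K) (a c : σ →₀ ℕ) (r s : K) :
    genAct ν (monomial a r) (monomial c s) = monomial (c - a) (ν c a * (r * s)) := by
  unfold genAct
  rw [← single_eq_monomial a r, ← single_eq_monomial c s, AddMonoidAlgebra.coeff_single,
    AddMonoidAlgebra.coeff_single]
  rw [Finsupp.sum_single_index, Finsupp.sum_single_index]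
  · simp only [mul_zero, map_zero]
  · simp only [mul_zero, zero_mul, map_zero, Finsupp.sum_single_index, Finsupp.sum,
      Finset.sum_const_zero]

theorem genAct_mul {ν : (σ →₀ ℕ) → (σ →₀ ℕ) → K}
    (hν : ∀ c a b, ν c (a + b) = ν c b * ν (c - b) a) (α β f : MvPolynomial σ K) :
    genAct ν (α * β) f = genAct ν α (genAct ν β f) := by
  induction α using MvPolynomial.induction_on' with
  | add p q hp hq => rw [add_mul, genAct_add_left, hp, hq, genAct_add_left]
  | monomial a r =>
    induction β using MvPolynomial.induction_on' with
    | add p q hp hq =>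
      rw [mul_add, genAct_add_left, hp, hq, ← genAct_add_right, genAct_add_left]
    | monomial b s =>
      induction f using MvPolynomial.induction_on' with
      | add p q hp hq =>
        rw [genAct_add_right, hp, hq, ← genAct_add_right, ← genAct_add_right]
      | monomial c t =>
        rw [monomial_mul, genAct_monomial, genAct_monomial, genAct_monomial,
          show c - (a + b) = c - b - a from by rw [tsub_tsub, add_comm], hν]
        congr 1
        ring

/-- The annihilator ideal of `f` under the action `genAct ν`. -/
noncomputable def annG (ν : (σ →₀ ℕ) → (σ →₀ ℕ) → K)
    (hν : ∀ c a b, ν c (a + b) = ν c b * ν (c - b) a) (f : MvPolynomial σ K) :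
    Ideal (MvPolynomial σ K) where
  carrier := {α | genAct ν α f = 0}
  zero_mem' := genAct_zero_left ν f
  add_mem' := by
    intro a b ha hb
    show genAct ν (a + b) f = 0
    rw [genAct_add_left, ha, hb, add_zero]
  smul_mem' := by
    intro c α hα
    show genAct ν (c * α) f = 0
    rw [genAct_mul hν, hα, genAct_zero_right]

/-- Structure coefficient of the contraction (apolarity) action: `X^a` sends `x^c`
to `x^(c-a)` if `a ≤ c` and to `0` otherwise. -/
noncomputable def cnu (c a : σ →₀ ℕ) : K :=
  open scoped Classical in if a ≤ c then 1 else 0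

theorem cnu_mul (c a b : σ →₀ ℕ) :
    (cnu c (a + b) : K) = cnu c b * cnu (c - b) a := by
  classical
  unfold cnu
  by_cases hb : b ≤ c
  · by_cases ha : a ≤ c - b
    · have h : a + b ≤ c := (le_tsub_iff_right hb).mp ha
      simp [hb, ha, h]
    · have h : ¬ a + b ≤ c := fun h => ha ((le_tsub_iff_right hb).mpr h)
      simp [hb, ha, h]
  · have h : ¬ a + b ≤ c := fun h => hb (le_trans le_add_self h)
    simp [hb, h]

/-- The contraction action `α ∘ f`. -/
noncomputable def cAct (α f : MvPolynomial σ K) : MvPolynomial σ K :=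
  genAct cnu α f

/-- The annihilator `Ann(f)` of `f` under the contraction action, as an ideal. -/
noncomputable def cAnn (f : MvPolynomial σ K) : Ideal (MvPolynomial σ K) :=
  annG cnu cnu_mul f

theorem mem_cAnn {f α : MvPolynomial σ K} : α ∈ cAnn f ↔ cAct α f = 0 := Iff.rfl

/-- The `K`-submodule of polynomials all of whose monomials satisfy `P`. -/
noncomputable def bihom (K : Type*) [CommSemiring K] {σ : Type*} (P : (σ →₀ ℕ) → Prop) :
    Submodule K (MvPolynomial σ K) where
  carrier := {p | ∀ c ∈ p.support, P c}
  zero_mem' := by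
    intro c hc
    simp at hc
  add_mem' := by
    classical
    intro p q hp hq c hc
    rcases Finset.mem_union.mp (MvPolynomial.support_add hc) with h | h
    · exact hp c h
    · exact hq c h
  smul_mem' := by
    intro k p hp c hc
    exact hp c (MvPolynomial.support_smul hc)

/-- The x-degree of an exponent vector. -/
def degX {n m : ℕ} (c : (Fin (n + 1) ⊕ Fin m) →₀ ℕ) : ℕ := ∑ r, c (Sum.inl r)

/-- The u-degree of an exponent vector. -/
def degU {n m : ℕ} (c : (Fin (n + 1) ⊕ Fin m) →₀ ℕ) : ℕ := ∑ k, c (Sum.inr k)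

/-- The bihomogeneous component `T_(i,j)`. -/
noncomputable def Tbi (K : Type*) [CommSemiring K] {n m : ℕ} (i j : ℕ) :
    Submodule K (MvPolynomial (Fin (n + 1) ⊕ Fin m) K) :=
  bihom K fun c => degX c = i ∧ degU c = j

/-- The bigraded component `A_(i,j)` of `A = T ⧸ Ann(f)`: the image of `T_(i,j)`
in the quotient. -/
noncomputable def Abi {K : Type*} [Field K] {n m : ℕ}
    (f : MvPolynomial (Fin (n + 1) ⊕ Fin m) K) (i j : ℕ) :
    Submodule K (MvPolynomial (Fin (n + 1) ⊕ Fin m) K ⧸ cAnn f) :=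
  (Tbi K i j).map (Ideal.Quotient.mkₐ K (cAnn f)).toLinearMap

/-!
A monomial operator `X^a` kills a monomial `x^c` unless `a ≤ c`. Among the terms `x_t^{d₁} g_t`
of `f`, only the one with `t = r` is divisible by `X_r^{d₁} U^ρ`, so `X_r^{d₁} U^ρ ∘ f` is
`U^ρ ∘ g_r` read in the `u`-variables. As renaming variables is injective, the binomial
annihilates `f` exactly when the two contractions agree, and a contraction of monomials is
either `0` or the quotient monomial.
-/

theorem cAct_monomial_monomial (a c : σ →₀ ℕ) (k b : K) :
    cAct (monomial a k) (monomial c b) = if a ≤ c then monomial (c - a) (k * b) else 0 := by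
  classical
  rw [cAct, genAct_monomial, cnu]
  split_ifs <;> simp

theorem cAct_sum_right (α : MvPolynomial σ K) {ι : Type*} (s : Finset ι)
    (F : ι → MvPolynomial σ K) :
    cAct α (∑ i ∈ s, F i) = ∑ i ∈ s, cAct α (F i) :=
  map_sum (AddMonoidHom.mk ⟨cAct α, genAct_zero_right cnu α⟩ (genAct_add_right cnu α)) F s

theorem cAct_sub_left {R : Type*} [CommRing R] (α β f : MvPolynomial σ R) :
    cAct (α - β) f = cAct α f - cAct β f :=
  map_sub (AddMonoidHom.mk' (fun α => cAct α f) fun α β => genAct_add_left cnu α β f) α β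

theorem ite_monomial_one_eq_ite_monomial_one_iff [Nontrivial K] (P Q : Prop) [Decidable P]
    [Decidable Q] (A B : σ →₀ ℕ) :
    ((if P then monomial A (1 : K) else 0) = if Q then monomial B 1 else 0) ↔
      (¬P ∧ ¬Q) ∨ (P ∧ Q ∧ A = B) := by
  by_cases hP : P <;> by_cases hQ : Q <;>
    simp [hP, hQ, eq_comm (a := (0 : MvPolynomial σ K))]

section Bigraded

variable {ι : Type*}

theorem single_inl_add_mapDomain_inr_le_iff {d : ℕ} (hd : d ≠ 0) (r t : ι) (ρ γ : σ →₀ ℕ) :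
    Finsupp.single (Sum.inl r) d + ρ.mapDomain Sum.inr ≤
        Finsupp.single (Sum.inl t) d + γ.mapDomain Sum.inr ↔ r = t ∧ ρ ≤ γ := by
  classical
  simp only [Finsupp.le_def, Finsupp.coe_add, Pi.add_apply, Finsupp.single_apply, Sum.forall,
    Sum.inl.injEq, Set.mem_range, reduceCtorEq, exists_false, not_false_eq_true,
    Finsupp.mapDomain_of_notMem_range, add_zero, ↓reduceIte,
    Finsupp.mapDomain_apply Sum.inr_injective, zero_add, and_congr_left_iff]
  refine fun _ => ⟨fun h => ?_, by rintro rfl _; exact le_rfl⟩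
  by_contra hrt
  simpa [Ne.symm hrt, hd] using h r

theorem single_inl_add_mapDomain_inr_tsub (r : ι) (d : ℕ) (ρ γ : σ →₀ ℕ) :
    Finsupp.single (Sum.inl r) d + γ.mapDomain Sum.inr -
        (Finsupp.single (Sum.inl r) d + ρ.mapDomain Sum.inr) = (γ - ρ).mapDomain Sum.inr := by
  classical
  ext (i | k) <;>
    simp [Finsupp.single_apply, Finsupp.mapDomain_apply Sum.inr_injective,
      Finsupp.mapDomain_of_notMem_range]

variable [Fintype ι]

noncomputable def cwNagata (d : ℕ) (g : ι → σ →₀ ℕ) : MvPolynomial (ι ⊕ σ) K :=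
  ∑ r, X (Sum.inl r) ^ d * monomial ((g r).mapDomain Sum.inr) 1

theorem cAct_X_pow_mul_monomial_cwNagata {d : ℕ} (hd : d ≠ 0) (g : ι → σ →₀ ℕ) (r : ι)
    (ρ : σ →₀ ℕ) :
    cAct (X (Sum.inl r) ^ d * monomial (ρ.mapDomain Sum.inr) 1) (cwNagata d g : MvPolynomial _ K) =
      rename Sum.inr (cAct (monomial ρ 1) (monomial (g r) 1)) := by
  classical
  simp only [cwNagata, ← monomial_single_add, cAct_sum_right, cAct_monomial_monomial,
    single_inl_add_mapDomain_inr_le_iff hd]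
  rw [Finset.sum_eq_single r (fun t _ htr => if_neg fun h => htr h.1.symm) (by simp)]
  simp [single_inl_add_mapDomain_inr_tsub, apply_ite (rename _), rename_monomial]

end Bigraded

open MvPolynomial in
theorem stmt_13_general {K : Type*} [Field K] (n m d₁ : ℕ)
    (hd₁ : 1 ≤ d₁)
    (g : Fin (n + 1) → (Fin m →₀ ℕ))
    (f : MvPolynomial (Fin (n + 1) ⊕ Fin m) K)
    (hf : f = ∑ r, X (Sum.inl r) ^ d₁ * monomial ((g r).mapDomain Sum.inr) 1)
    (r s : Fin (n + 1)) (ρ τ : Fin m →₀ ℕ) :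
    ((X (Sum.inl r) ^ d₁ * monomial (ρ.mapDomain Sum.inr) 1 -
        X (Sum.inl s) ^ d₁ * monomial (τ.mapDomain Sum.inr) 1 ∈ cAnn f) ↔
      cAct (monomial ρ (1 : K)) (monomial (g r) 1) =
        cAct (monomial τ (1 : K)) (monomial (g s) 1)) ∧
    (cAct (monomial ρ (1 : K)) (monomial (g r) 1) =
        cAct (monomial τ (1 : K)) (monomial (g s) 1) ↔
      ((¬ ρ ≤ g r ∧ ¬ τ ≤ g s) ∨ (ρ ≤ g r ∧ τ ≤ g s ∧ g r - ρ = g s - τ))) := by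
  obtain rfl : f = cwNagata d₁ g := hf
  have hd : d₁ ≠ 0 := Nat.one_le_iff_ne_zero.mp hd₁
  constructor
  · rw [mem_cAnn, cAct_sub_left, cAct_X_pow_mul_monomial_cwNagata hd,
      cAct_X_pow_mul_monomial_cwNagata hd, sub_eq_zero,
      (rename_injective _ Sum.inr_injective).eq_iff]
  · rw [cAct_monomial_monomial, cAct_monomial_monomial, mul_one,
      ite_monomial_one_eq_ite_monomial_one_iff]

open MvPolynomial in
theorem stmt_13 {K : Type*} [Field K] [CharZero K] (n m d₁ d₂ : ℕ)
    (hd₁ : 1 ≤ d₁) (hd₂ : 2 ≤ d₂)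
    (g : Fin (n + 1) → (Fin m →₀ ℕ))
    (hgdeg : ∀ r, (∑ k, g r k) = d₂)
    (hginj : Function.Injective g)
    (f : MvPolynomial (Fin (n + 1) ⊕ Fin m) K)
    (hf : f = ∑ r, X (Sum.inl r) ^ d₁ * monomial ((g r).mapDomain Sum.inr) 1)
    (r s : Fin (n + 1)) (hrs : r ≠ s) (ρ τ : Fin m →₀ ℕ) (j : ℕ)
    (hρ : (∑ k, ρ k) = j) (hτ : (∑ k, τ k) = j) (hj : 1 ≤ j) (hjd : j ≤ d₂) :
    ((X (Sum.inl r) ^ d₁ * monomial (ρ.mapDomain Sum.inr) 1 -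
        X (Sum.inl s) ^ d₁ * monomial (τ.mapDomain Sum.inr) 1 ∈ cAnn f) ↔
      cAct (monomial ρ (1 : K)) (monomial (g r) 1) =
        cAct (monomial τ (1 : K)) (monomial (g s) 1)) ∧
    (cAct (monomial ρ (1 : K)) (monomial (g r) 1) =
        cAct (monomial τ (1 : K)) (monomial (g s) 1) ↔
      ((¬ ρ ≤ g r ∧ ¬ τ ≤ g s) ∨ (ρ ≤ g r ∧ τ ≤ g s ∧ g r - ρ = g s - τ))) :=
  stmt_13_general n m d₁ hd₁ g f hf r s ρ τ

end CW
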